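/- Let N be a rooted phylogenetic network on a finite set X and let Ñ be its normalisation. If p is a directed path from u to v in Ñ, then there is a directed path in N from u to v that includes all the vertices of p (and possibly additional vertices). -/

import Mathlib

/-!
Formalisation framework for rooted phylogenetic networks.

A network is represented as a directed graph on an ambient vertex type `V`:
a vertex set `verts`, a root vertex `root`, and an arc relation `arc`.
-/

structure Net (V : Type*) where
  verts : Set V
  root : V
  arc : V → V → Prop

namespace Net

variable {V : Type*} {W : Type*}

/-- `N.reach u v` means there is a (possibly empty) directed path from `u` to `v`. -/
def reach (N : Net V) : V → V → Prop := Relation.ReflTransGen N.arc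

/-- The in-degree of a vertex. -/
noncomputable def inDeg (N : Net V) (v : V) : ℕ := {u | N.arc u v}.ncard

/-- The out-degree of a vertex. -/
noncomputable def outDeg (N : Net V) (v : V) : ℕ := {w | N.arc v w}.ncard

/-- The leaves of `N`: the vertices of out-degree 0. -/
def leaves (N : Net V) : Set V := {v ∈ N.verts | N.outDeg v = 0}

/-- `N.IsPathFrom u v l` : the list `l` is a directed path in `N` from `u` to `v`
(consecutive entries joined by arcs; a one-element list is the empty path). -/
def IsPathFrom (N : Net V) (u v : V) (l : List V) : Prop :=
  l.Chain' N.arc ∧ l.head? = some u ∧ l.getLast? = some v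

/-- A vertex is visible if some leaf is such that every directed path from the
root to that leaf passes through the vertex. -/
def Visible (N : Net V) (x : V) : Prop :=
  x ∈ N.verts ∧ ∃ y ∈ N.leaves, ∀ l : List V, N.IsPathFrom N.root y l → x ∈ l

/-- A subdividing vertex is one of in-degree 1 and out-degree 1. -/
def Subdividing (N : Net V) (v : V) : Prop := N.inDeg v = 1 ∧ N.outDeg v = 1

/-- The digraph `Cov(N)` on the visible vertices of `N`: an arc `(u,v)` whenever
`u ≠ v`, `u →_N v`, and no visible vertex lies strictly between `u` and `v`. -/
def cov (N : Net V) : Net V where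
  verts := {v | N.Visible v}
  root := N.root
  arc u v := N.Visible u ∧ N.Visible v ∧ u ≠ v ∧ N.reach u v ∧
    ¬ ∃ w, N.Visible w ∧ w ≠ u ∧ w ≠ v ∧ N.reach u w ∧ N.reach w v

/-- The normalisation `Ñ` of `N`: obtained from `Cov(N)` by suppressing every
subdividing vertex.  Its vertices are the visible vertices of `N` that are not
subdividing in `Cov(N)`, with an arc `(u,v)` whenever `Cov(N)` has a directed path
from `u` to `v` (of length at least one) all of whose interior vertices are
subdividing in `Cov(N)`. -/
def normalise (N : Net V) : Net V where
  verts := {v | N.Visible v ∧ ¬ N.cov.Subdividing v}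
  root := N.root
  arc u v := (N.Visible u ∧ ¬ N.cov.Subdividing u) ∧ (N.Visible v ∧ ¬ N.cov.Subdividing v) ∧
    ∃ l : List V, N.cov.IsPathFrom u v l ∧ 2 ≤ l.length ∧
      ∀ w ∈ l.tail.dropLast, N.cov.Subdividing w

/-- `N` is a rooted phylogenetic network on the finite nonempty leaf set `X`. -/
structure IsPhylo (N : Net V) (X : Set V) : Prop where
  finite : N.verts.Finite
  nonempty : X.Nonempty
  arc_mem : ∀ ⦃u v : V⦄, N.arc u v → u ∈ N.verts ∧ v ∈ N.verts
  acyclic : ∀ ⦃u v : V⦄, N.arc u v → ¬ N.reach v u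
  root_mem : N.root ∈ N.verts
  root_inDeg : N.inDeg N.root = 0
  root_unique : ∀ v ∈ N.verts, N.inDeg v = 0 → v = N.root
  leaves_eq : N.leaves = X
  leaf_inDeg : ∀ x ∈ X, N.inDeg x = 1
  interior_deg : ∀ v ∈ N.verts, v ≠ N.root → v ∉ X →
    (N.inDeg v = 1 ∧ 2 ≤ N.outDeg v) ∨ (N.outDeg v = 1 ∧ 2 ≤ N.inDeg v)

/-- `N` has no shortcuts: no arc `(u,v)` such that there is also a directed path
from `u` to `v` of length at least 2 (i.e. a path-list with at least 3 entries). -/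
def NoShortcuts (N : Net V) : Prop :=
  ∀ u v : V, N.arc u v → ¬ ∃ l : List V, N.IsPathFrom u v l ∧ 3 ≤ l.length

/-- Tree-child: every vertex is visible. -/
def TreeChild (N : Net V) : Prop := ∀ v ∈ N.verts, N.Visible v

/-- Normal: tree-child with no shortcuts. -/
def Normal (N : Net V) : Prop := N.TreeChild ∧ N.NoShortcuts

/-- A tree: every vertex has in-degree at most 1. -/
def IsTree (N : Net V) : Prop := ∀ v ∈ N.verts, N.inDeg v ≤ 1

/-- The cluster of `v`: the set of leaves reachable from `v`. -/
def cluster (N : Net V) (v : V) : Set V := {x ∈ N.leaves | N.reach v x}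

/-- The identifying set of `v`: the set of leaves `x` such that every directed
path from the root to `x` passes through `v`. -/
def ident (N : Net V) (v : V) : Set V :=
  {x ∈ N.leaves | ∀ l : List V, N.IsPathFrom N.root x l → v ∈ l}

/-- A digraph isomorphism between two networks, given by the map `f`. -/
def NetEquiv (M : Net V) (M' : Net W) (f : V → W) : Prop :=
  Set.BijOn f M.verts M'.verts ∧
    ∀ u ∈ M.verts, ∀ v ∈ M.verts, (M.arc u v ↔ M'.arc (f u) (f v))

/-- Two networks over the same ambient type are equivalent relative to a leaf set
`X` if there is a digraph isomorphism between them fixing each element of `X`. -/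
def EquivOn (M M' : Net V) (X : Set V) : Prop :=
  ∃ f : V → V, NetEquiv M M' f ∧ ∀ x ∈ X, f x = x

/-- `N₁ ⊕ N₂` : disjoint copies of `N₁` and `N₂` under a new root (`none`). -/
def oplus {V₁ V₂ : Type*} (N₁ : Net V₁) (N₂ : Net V₂) : Net (Option (V₁ ⊕ V₂)) where
  verts := insert none
    ((fun v => some (Sum.inl v)) '' N₁.verts ∪ (fun v => some (Sum.inr v)) '' N₂.verts)
  root := none
  arc a b :=
    match a, b with
    | none, some (Sum.inl w) => w = N₁.root
    | none, some (Sum.inr w) => w = N₂.root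
    | some (Sum.inl u), some (Sum.inl w) => N₁.arc u w
    | some (Sum.inr u), some (Sum.inr w) => N₂.arc u w
    | _, _ => False

/-- `N₁ ⊗ N₂` : identify each leaf `x` of `N₁` with the root of its own copy of `N₂`;
the copy of a non-leaf vertex `u` of `N₁` is `Sum.inl u`, and the vertex `w` of the
copy of `N₂` attached at leaf `x` of `N₁` is `Sum.inr (x, w)`. -/
def otimes {V₁ V₂ : Type*} (N₁ : Net V₁) (N₂ : Net V₂) : Net (V₁ ⊕ V₁ × V₂) where
  verts := Sum.inl '' (N₁.verts \ N₁.leaves) ∪ Sum.inr '' (N₁.leaves ×ˢ N₂.verts)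
  root := Sum.inl N₁.root
  arc a b :=
    match a, b with
    | Sum.inl u, Sum.inl w => N₁.arc u w ∧ w ∉ N₁.leaves
    | Sum.inl u, Sum.inr (x, w) => x ∈ N₁.leaves ∧ N₁.arc u x ∧ w = N₂.root
    | Sum.inr (x, w), Sum.inr (x', w') => x = x' ∧ x ∈ N₁.leaves ∧ N₂.arc w w'
    | _, _ => False

end Net

/-- A hierarchy: a collection of sets any two of which are disjoint or nested. -/
def IsHierarchy {V : Type*} (C : Set (Set V)) : Prop :=
  ∀ A ∈ C, ∀ B ∈ C, A ∩ B = ∅ ∨ A ⊆ B ∨ B ⊆ A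

/-! Every arc of `Cov(N)` is witnessed by a path of `N`, and every arc of `Ñ` by a path of
`Cov(N)`. Replacing each arc of a path by such a witness, twice, refines a path of `Ñ` into a
path of `N` through all of its vertices. -/

namespace Net

variable {V : Type*} {M N : Net V}

lemma isPathFrom_cons_cons {u v a b : V} {s : List V} :
    N.IsPathFrom u v (a :: b :: s) ↔ u = a ∧ N.arc a b ∧ N.IsPathFrom b v (b :: s) := by
  constructor
  · rintro ⟨hc, hu, hv⟩
    exact ⟨(Option.some.inj hu).symm, (List.isChain_cons_cons.mp hc).1,
      (List.isChain_cons_cons.mp hc).2, rfl, hv⟩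
  · rintro ⟨rfl, hab, hc, -, hv⟩
    exact ⟨List.isChain_cons_cons.mpr ⟨hab, hc⟩, rfl, hv⟩

lemma isPathFrom_cons {a b v : V} {q : List V} (hab : N.arc a b) (hq : N.IsPathFrom b v q) :
    N.IsPathFrom a v (a :: q) := by
  obtain ⟨s, rfl⟩ := List.head?_eq_some_iff.mp hq.2.1
  exact isPathFrom_cons_cons.mpr ⟨rfl, hab, hq⟩

lemma IsPathFrom.ne_nil {u v : V} {q : List V} (hq : N.IsPathFrom u v q) : q ≠ [] := by
  rintro rfl
  simp [IsPathFrom] at hq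

lemma IsPathFrom.head_mem {u v : V} {q : List V} (hq : N.IsPathFrom u v q) : u ∈ q :=
  List.mem_of_mem_head? hq.2.1

lemma IsPathFrom.reach {u v : V} {q : List V} (hq : N.IsPathFrom u v q) : N.reach u v := by
  have := List.relationReflTransGen_of_exists_isChain q hq.1 hq.ne_nil
  rwa [(List.head_eq_iff_head?_eq_some _).mpr hq.2.1,
    (List.getLast_eq_iff_getLast?_eq_some _).mpr hq.2.2] at this

lemma IsPathFrom.exists_superpath_of_reach {a b v : V} {q : List V} (hab : N.reach a b)
    (hq : N.IsPathFrom b v q) : ∃ q', N.IsPathFrom a v q' ∧ q ⊆ q' := by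
  induction hab using Relation.ReflTransGen.head_induction_on with
  | refl => exact ⟨q, hq, List.Subset.refl q⟩
  | head hac _ ih =>
    obtain ⟨q', hq', hqq'⟩ := ih
    exact ⟨_ :: q', isPathFrom_cons hac hq', List.Subset.trans hqq' (List.subset_cons_self _ _)⟩

lemma IsPathFrom.exists_superpath (hMN : ∀ a b, M.arc a b → N.reach a b) {u v : V}
    {p : List V} (hp : M.IsPathFrom u v p) : ∃ q, N.IsPathFrom u v q ∧ p ⊆ q := by
  induction p generalizing u with
  | nil => exact absurd rfl hp.ne_nil
  | cons a s ih =>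
    cases s with
    | nil =>
      obtain ⟨-, hu, hv⟩ := hp
      cases Option.some.inj hu
      cases Option.some.inj hv
      exact ⟨[a], ⟨List.isChain_singleton a, rfl, rfl⟩, List.Subset.refl _⟩
    | cons b s =>
      obtain ⟨rfl, hab, hp'⟩ := isPathFrom_cons_cons.mp hp
      obtain ⟨q, hq, hsq⟩ := ih hp'
      obtain ⟨q', hq', hqq'⟩ := hq.exists_superpath_of_reach (hMN _ _ hab)
      exact ⟨q', hq', List.cons_subset.mpr ⟨hq'.head_mem, List.Subset.trans hsq hqq'⟩⟩

lemma reach_of_cov_arc {u v : V} (h : N.cov.arc u v) : N.reach u v :=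
  h.2.2.2.1

lemma reach_of_normalise_arc {u v : V} (h : N.normalise.arc u v) : N.reach u v := by
  obtain ⟨-, -, l, hl, -⟩ := h
  obtain ⟨q, hq, -⟩ := hl.exists_superpath fun _ _ => reach_of_cov_arc
  exact hq.reach

end Net

theorem stmt0 {V : Type*} (N : Net V) (u v : V) (p : List V)
    (hp : N.normalise.IsPathFrom u v p) :
    ∃ q : List V, N.IsPathFrom u v q ∧ ∀ w ∈ p, w ∈ q :=
  hp.exists_superpath fun _ _ => Net.reach_of_normalise_arc
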